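/- arXiv:1112.2861 — 2 statements merged into one kernel-verified Lean document; each statement's English description precedes it below -/
import Mathlib

section
/- Let N = {1,…,n} be partitioned into nonempty classes N_1,…,N_t, let a = (a_1,…,a_t) be an integer vector with 0 ≤ a_h ≤ |N_h| for all h and a_1 ≥ 1, and let χ : 2^N → {0,1} be defined by χ(S) = 1 if and only if ∑_{h=1}^k |S ∩ N_h| ≥ ∑_{h=1}^k a_h for all k = 1,…,t (the complete simple game with unique shift-minimal winning vector a). Then χ is a simple game and μ(χ) ≤ √n; that is, χ is √n-roughly weighted. -/
open Finset

/-- `f` is `α`-roughly weighted: there are real weights such that every winning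
coalition has weight at least `1` and every losing coalition weight at most `α`. -/
def RoughlyWeighted {n : ℕ} (f : Finset (Fin n) → Bool) (α : ℝ) : Prop :=
  ∃ w : Fin n → ℝ,
    (∀ S : Finset (Fin n), f S = true → 1 ≤ ∑ i ∈ S, w i) ∧
    (∀ S : Finset (Fin n), f S = false → ∑ i ∈ S, w i ≤ α)

/-- The critical threshold value `μ(f)`: the smallest `α ≥ 1` such that `f` is
`α`-roughly weighted. -/
noncomputable def mu {n : ℕ} (f : Finset (Fin n) → Bool) : ℝ :=
  sInf {α : ℝ | 1 ≤ α ∧ RoughlyWeighted f α}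

/-- A simple game: monotone, the empty coalition loses and the grand coalition wins. -/
def SimpleGame {n : ℕ} (χ : Finset (Fin n) → Bool) : Prop :=
  χ ∅ = false ∧ χ Finset.univ = true ∧
    ∀ S T : Finset (Fin n), S ⊆ T → χ S = true → χ T = true

/-! Players of class `h` all get the same weight `c h`. If `∑ a ≥ √n`, the constant weight
`1 / ∑ a` works: winners have at least `∑ a` players, losers at most `n`. Otherwise take `c`
nonincreasing with `c h₀ = 1 / a h₀` on the first class; Abel summation against the prefix
inequalities gives every winner weight at least `c h₀ * a h₀ = 1`. A loser falls short at some
prefix `k`, so with all weights at most `1 / a h₀` it gets at most `(∑_{h ≤ k} a h - 1) / a h₀`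
there, and the later classes are weighted so that its at most `n` other players add at most
the rest of `√n`. -/

open Function

section PrefixSums

variable {R ι : Type*} [CommRing R] [PartialOrder R] [IsOrderedRing R] [LinearOrder ι]

theorem sum_mul_le_sum_mul_of_sum_filter_le (s : Finset ι) {c x y : ι → R}
    (hc : ∀ i ∈ s, 0 ≤ c i) (hanti : AntitoneOn c s)
    (hxy : ∀ k ∈ s, ∑ i ∈ s with i ≤ k, x i ≤ ∑ i ∈ s with i ≤ k, y i) :
    ∑ i ∈ s, c i * x i ≤ ∑ i ∈ s, c i * y i := by
  induction s using Finset.induction_on_max generalizing c with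
  | empty => simp
  | insert a s ha ih =>
    have ha' : a ∉ s := fun h => lt_irrefl a (ha a h)
    have ha_mem : a ∈ insert a s := mem_insert_self a s
    have hsub : ∀ i ∈ s, i ∈ insert a s := fun i hi => mem_insert_of_mem hi
    -- Abel summation: split off `c a` times the full sum, leaving the weights `c - c a ≥ 0`.
    have peel : ∀ z : ι → R, ∑ i ∈ insert a s, c i * z i
        = ∑ i ∈ s, (c i - c a) * z i + c a * ∑ i ∈ insert a s, z i := by
      intro z
      simp only [sum_insert ha', sub_mul, sum_sub_distrib, mul_add, mul_sum]
      ring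
    have hfilter : ∀ k ∈ s, {i ∈ insert a s | i ≤ k} = {i ∈ s | i ≤ k} := fun k hk => by
      rw [filter_insert, if_neg (ha k hk).not_ge]
    have hfull : {i ∈ insert a s | i ≤ a} = insert a s :=
      filter_true_of_mem fun i hi => (mem_insert.1 hi).elim le_of_eq fun h => (ha i h).le
    rw [peel x, peel y]
    refine add_le_add (ih (fun i hi => sub_nonneg.2 ?_) (fun i hi j hj hij => ?_) fun k hk => ?_) ?_
    · exact hanti (hsub i hi) ha_mem (ha i hi).le
    · exact sub_le_sub_right (hanti (hsub i hi) (hsub j hj) hij) _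
    · simpa only [hfilter k hk] using hxy k (hsub k hk)
    · exact mul_le_mul_of_nonneg_left (hfull ▸ hxy a ha_mem) (hc a ha_mem)

theorem sum_mul_le_sum_mul_of_sum_Iic_le [Fintype ι] [LocallyFiniteOrderBot ι] {c x y : ι → R}
    (hc : ∀ i, 0 ≤ c i) (hanti : Antitone c)
    (hxy : ∀ k, ∑ i ∈ Iic k, x i ≤ ∑ i ∈ Iic k, y i) :
    ∑ i, c i * x i ≤ ∑ i, c i * y i :=
  sum_mul_le_sum_mul_of_sum_filter_le univ (fun i _ => hc i) (hanti.antitoneOn _)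
    fun k _ => by simpa only [filter_ge_eq_Iic] using hxy k

end PrefixSums

section Weights

variable {α ι : Type*} [Fintype ι] [DecidableEq α]

def classWeight (P : ι → Finset α) (c : ι → ℝ) (i : α) : ℝ :=
  ∑ h, if i ∈ P h then c h else 0

theorem sum_classWeight (P : ι → Finset α) (c : ι → ℝ) (S : Finset α) :
    ∑ i ∈ S, classWeight P c i = ∑ h, c h * #(S ∩ P h) := by
  simp only [classWeight]
  rw [sum_comm]
  refine sum_congr rfl fun h _ => ?_
  rw [← sum_filter, sum_const, filter_mem_eq_inter, nsmul_eq_mul, mul_comm]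

theorem sum_card_inter_le_card {P : ι → Finset α} (hP : Pairwise (Disjoint on P))
    (S : Finset α) : ∑ h, #(S ∩ P h) ≤ #S := by
  rw [← card_biUnion fun h _ h' _ hne => (hP hne).mono inter_subset_right inter_subset_right]
  exact card_le_card (biUnion_subset.2 fun _ _ => inter_subset_left)

theorem sum_mul_le_of_le_of_forall_lt [LinearOrder ι] [LocallyFiniteOrderBot ι]
    {c s : ι → ℝ} (k : ι) {M d N : ℝ} (hs : ∀ h, 0 ≤ s h) (hM : ∀ h, c h ≤ M)
    (hd : ∀ h, k < h → c h ≤ d) (hd₀ : 0 ≤ d) (hN : ∑ h, s h ≤ N) :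
    ∑ h, c h * s h ≤ M * ∑ h ∈ Iic k, s h + d * N := by
  have hsplit : ∀ f : ι → ℝ, ∑ h, f h = ∑ h ∈ Iic k, f h + ∑ h with k < h, f h := fun f => by
    rw [← sum_filter_add_sum_filter_not univ (· ≤ k), filter_ge_eq_Iic]
    simp only [not_le]
  have hhead : ∑ h ∈ Iic k, c h * s h ≤ M * ∑ h ∈ Iic k, s h := by
    rw [mul_sum]
    exact sum_le_sum fun h _ => mul_le_mul_of_nonneg_right (hM h) (hs h)
  have htail : ∑ h with k < h, c h * s h ≤ d * N := calc
    ∑ h with k < h, c h * s h ≤ d * ∑ h with k < h, s h := by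
      rw [mul_sum]
      exact sum_le_sum fun h hh => mul_le_mul_of_nonneg_right (hd h (mem_filter.1 hh).2) (hs h)
    _ ≤ d * N := by
      refine mul_le_mul_of_nonneg_left (le_trans ?_ hN) hd₀
      rw [hsplit s]
      exact le_add_of_nonneg_left (sum_nonneg fun h _ => hs h)
  rw [hsplit]
  exact add_le_add hhead htail

end Weights

section RoughlyWeighted

variable {n : ℕ} {f : Finset (Fin n) → Bool}

theorem RoughlyWeighted.mono {α β : ℝ} (hf : RoughlyWeighted f α) (hαβ : α ≤ β) :
    RoughlyWeighted f β :=
  let ⟨w, hwin, hlose⟩ := hf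
  ⟨w, hwin, fun S hS => (hlose S hS).trans hαβ⟩

theorem mu_le_of_roughlyWeighted {α : ℝ} (hα : 1 ≤ α) (hf : RoughlyWeighted f α) : mu f ≤ α :=
  csInf_le ⟨1, fun _ hβ => hβ.1⟩ ⟨hα, hf⟩

theorem roughlyWeighted_div_of_le_card {m : ℝ} (hm : 0 < m)
    (hwin : ∀ S, f S = true → m ≤ #S) : RoughlyWeighted f (n / m) := by
  refine ⟨fun _ => 1 / m, fun S hS => ?_, fun S _ => ?_⟩
  · rw [sum_const, nsmul_eq_mul, mul_one_div, le_div_iff₀ hm, one_mul]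
    exact hwin S hS
  · rw [sum_const, nsmul_eq_mul, mul_one_div]
    gcongr
    exact_mod_cast card_finset_fin_le S

end RoughlyWeighted

section SqrtWeights

variable {ι : Type*} (n : ℕ) (a : ι → ℕ) (h₀ : ι)

/-- With class weights at most `1 / a h₀`, a coalition meeting the classes in `s` fewer than
`∑ h ∈ s, a h` times gets at most this weight from them. -/
noncomputable def shortfallWeight (s : Finset ι) : ℝ :=
  (((∑ h ∈ s, a h : ℕ) : ℝ) - 1) / a h₀

/-- The weight of class `h ≠ h₀` is capped so that, if a losing coalition already has weight
`shortfallWeight a h₀ (Iio h)` from the earlier classes, its at most `n` further players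
add at most the rest of `√n`. -/
noncomputable def sqrtWeights [LinearOrder ι] [LocallyFiniteOrderBot ι] (h : ι) : ℝ :=
  if h = h₀ then 1 / a h₀ else min (1 / a h₀) ((√n - shortfallWeight a h₀ (Iio h)) / n)

variable {n a h₀}

theorem shortfallWeight_mono {s t : Finset ι} (hst : s ⊆ t) :
    shortfallWeight a h₀ s ≤ shortfallWeight a h₀ t := by
  unfold shortfallWeight
  gcongr

theorem shortfallWeight_le_sum [Fintype ι] (ha₀ : 1 ≤ a h₀) (s : Finset ι) :
    shortfallWeight a h₀ s ≤ ∑ h, (a h : ℝ) := calc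
  shortfallWeight a h₀ s ≤ ((∑ h ∈ s, a h : ℕ) : ℝ) := by
    rw [shortfallWeight, div_le_iff₀ (by exact_mod_cast ha₀)]
    nlinarith [(Nat.cast_nonneg (∑ h ∈ s, a h) : (0 : ℝ) ≤ _),
      (Nat.one_le_cast.2 ha₀ : (1 : ℝ) ≤ _)]
  _ ≤ ∑ h, (a h : ℝ) := by exact_mod_cast sum_le_sum_of_subset (subset_univ s)

variable [LinearOrder ι] [LocallyFiniteOrderBot ι]

theorem sqrtWeights_self : sqrtWeights n a h₀ h₀ = 1 / a h₀ := if_pos rfl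

theorem sqrtWeights_le (h : ι) : sqrtWeights n a h₀ h ≤ 1 / a h₀ := by
  unfold sqrtWeights
  split_ifs
  exacts [le_rfl, min_le_left _ _]

theorem sqrtWeights_nonneg [Fintype ι] (ha₀ : 1 ≤ a h₀) (hA : ∑ h, (a h : ℝ) ≤ √n) (h : ι) :
    0 ≤ sqrtWeights n a h₀ h := by
  unfold sqrtWeights
  split_ifs
  · positivity
  · refine le_min (by positivity) (div_nonneg (sub_nonneg.2 ?_) n.cast_nonneg)
    exact (shortfallWeight_le_sum ha₀ _).trans hA

theorem sqrtWeights_antitone (hbot : ∀ h, h₀ ≤ h) : Antitone (sqrtWeights n a h₀) := by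
  intro h h' hh'
  by_cases h_eq : h = h₀
  · rw [h_eq, sqrtWeights_self]
    exact sqrtWeights_le h'
  have h'_ne : h' ≠ h₀ := fun h'_eq => h_eq ((hh'.trans h'_eq.le).antisymm (hbot h))
  unfold sqrtWeights
  rw [if_neg h_eq, if_neg h'_ne]
  gcongr
  exact shortfallWeight_mono (Iio_subset_Iio hh')

theorem sqrtWeights_le_of_lt (hbot : ∀ h, h₀ ≤ h) {k h : ι} (hkh : k < h) :
    sqrtWeights n a h₀ h ≤ (√n - shortfallWeight a h₀ (Iic k)) / n := by
  unfold sqrtWeights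
  rw [if_neg ((hbot k).trans_lt hkh).ne']
  refine (min_le_right _ _).trans ?_
  gcongr
  exact shortfallWeight_mono fun j hj => mem_Iio.2 ((mem_Iic.1 hj).trans_lt hkh)

end SqrtWeights

section ShiftMinimal

variable {n : ℕ} {ι : Type*} [LinearOrder ι] [LocallyFiniteOrderBot ι]

/-- `χ` is the complete simple game on the classes `P h` with unique shift-minimal winning
vector `a`. -/
def HasShiftMinimalWinningVector (P : ι → Finset (Fin n)) (a : ι → ℕ)
    (χ : Finset (Fin n) → Bool) : Prop :=
  ∀ S, χ S = true ↔ ∀ k, ∑ h ∈ Iic k, a h ≤ ∑ h ∈ Iic k, #(S ∩ P h)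

namespace HasShiftMinimalWinningVector

variable {P : ι → Finset (Fin n)} {a : ι → ℕ} {χ : Finset (Fin n) → Bool}

theorem simpleGame (hχ : HasShiftMinimalWinningVector P a χ) (ha : ∀ h, a h ≤ #(P h)) {h₀ : ι}
    (ha₀ : 1 ≤ a h₀) : SimpleGame χ := by
  refine ⟨?_, ?_, fun S T hST hS => ?_⟩
  · rw [← Bool.not_eq_true, hχ]
    intro hwin
    have hzero : ∀ h ≤ h₀, a h = 0 := by simpa using hwin h₀
    simp [hzero h₀ le_rfl] at ha₀
  · rw [hχ]
    exact fun k => sum_le_sum fun h _ => by simpa using ha h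
  · rw [hχ] at hS ⊢
    exact fun k => (hS k).trans <| sum_le_sum fun h _ =>
      card_le_card (inter_subset_inter_right hST)

theorem sum_le_sum_card_inter [Fintype ι] (hχ : HasShiftMinimalWinningVector P a χ)
    {S : Finset (Fin n)} (hS : χ S = true) : ∑ h, a h ≤ ∑ h, #(S ∩ P h) := by
  cases isEmpty_or_nonempty ι
  · simp
  obtain ⟨k, -, hk⟩ := exists_max_image univ (id : ι → ι) univ_nonempty
  have hIic : Iic k = univ := eq_univ_of_forall fun h => mem_Iic.2 (hk h (mem_univ h))
  simpa only [hIic] using (hχ S).1 hS k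

theorem exists_sum_card_inter_add_one_le (hχ : HasShiftMinimalWinningVector P a χ)
    {S : Finset (Fin n)} (hS : χ S = false) :
    ∃ k, ∑ h ∈ Iic k, #(S ∩ P h) + 1 ≤ ∑ h ∈ Iic k, a h := by
  rw [← Bool.not_eq_true, hχ] at hS
  push Not at hS
  exact hS

theorem roughlyWeighted_sqrt_of_sqrt_le_sum [Fintype ι] (hχ : HasShiftMinimalWinningVector P a χ)
    (hP : Pairwise (Disjoint on P)) (hn : 0 < n) (hA : √n ≤ ∑ h, a h) :
    RoughlyWeighted χ √n := by
  have hApos : (0 : ℝ) < ∑ h, a h := (Real.sqrt_pos.2 (by exact_mod_cast hn)).trans_le hA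
  refine (roughlyWeighted_div_of_le_card hApos fun S hS => ?_).mono ?_
  · exact_mod_cast (hχ.sum_le_sum_card_inter hS).trans (sum_card_inter_le_card hP S)
  · refine div_le_of_le_mul₀ hApos.le (Real.sqrt_nonneg n) ?_
    calc (n : ℝ) = √n * √n := (Real.mul_self_sqrt n.cast_nonneg).symm
      _ ≤ √n * ∑ h, a h := by gcongr

theorem roughlyWeighted_sqrt_of_sum_le_sqrt [Fintype ι] (hχ : HasShiftMinimalWinningVector P a χ)
    (hP : Pairwise (Disjoint on P)) {h₀ : ι} (hbot : ∀ h, h₀ ≤ h) (ha₀ : 1 ≤ a h₀) (hn : 0 < n)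
    (hA : ∑ h, (a h : ℝ) ≤ √n) : RoughlyWeighted χ √n := by
  set c := sqrtWeights n a h₀
  have hc : ∀ h, 0 ≤ c h := sqrtWeights_nonneg ha₀ hA
  refine ⟨classWeight P c, fun S hS => ?_, fun S hS => ?_⟩
  · rw [sum_classWeight]
    calc (1 : ℝ) = c h₀ * a h₀ := by
          rw [show c h₀ = 1 / a h₀ from sqrtWeights_self, one_div_mul_cancel (by positivity)]
      _ ≤ ∑ h, c h * a h :=
          single_le_sum (fun h _ => mul_nonneg (hc h) (Nat.cast_nonneg _)) (mem_univ h₀)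
      _ ≤ ∑ h, c h * #(S ∩ P h) :=
          sum_mul_le_sum_mul_of_sum_Iic_le hc (sqrtWeights_antitone hbot)
            fun k => by exact_mod_cast (hχ S).1 hS k
  · obtain ⟨k, hk⟩ := hχ.exists_sum_card_inter_add_one_le hS
    have hprefix :
        1 / (a h₀ : ℝ) * ∑ h ∈ Iic k, (#(S ∩ P h) : ℝ) ≤ shortfallWeight a h₀ (Iic k) := by
      rw [one_div_mul_eq_div, shortfallWeight]
      gcongr
      exact le_sub_iff_add_le.2 (by exact_mod_cast hk)
    rw [sum_classWeight]
    calc ∑ h, c h * #(S ∩ P h)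
        ≤ 1 / (a h₀ : ℝ) * ∑ h ∈ Iic k, (#(S ∩ P h) : ℝ)
            + (√n - shortfallWeight a h₀ (Iic k)) / n * n :=
          sum_mul_le_of_le_of_forall_lt k (fun _ => Nat.cast_nonneg _) sqrtWeights_le
            (fun _ => sqrtWeights_le_of_lt hbot)
            (div_nonneg (sub_nonneg.2 ((shortfallWeight_le_sum ha₀ _).trans hA)) n.cast_nonneg)
            (by exact_mod_cast (sum_card_inter_le_card hP S).trans (card_finset_fin_le S))
      _ ≤ √n := by
          rw [div_mul_cancel₀ _ (by positivity)]
          linarith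

theorem roughlyWeighted_sqrt [Fintype ι] (hχ : HasShiftMinimalWinningVector P a χ)
    (hP : Pairwise (Disjoint on P)) {h₀ : ι} (hbot : ∀ h, h₀ ≤ h) (ha₀ : 1 ≤ a h₀) (hn : 0 < n) :
    RoughlyWeighted χ √n := by
  rcases le_total (∑ h, (a h : ℝ)) √n with hA | hA
  · exact hχ.roughlyWeighted_sqrt_of_sum_le_sqrt hP hbot ha₀ hn hA
  · exact hχ.roughlyWeighted_sqrt_of_sqrt_le_sum hP hn (by exact_mod_cast hA)

end HasShiftMinimalWinningVector

end ShiftMinimal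

theorem unique_shift_minimal_winning_vector_bound_general (n t : ℕ) (ht : 0 < t)
    (P : Fin t → Finset (Fin n))
    (hPdisj : ∀ h h' : Fin t, h ≠ h' → Disjoint (P h) (P h'))
    (a : Fin t → ℕ) (ha : ∀ h : Fin t, a h ≤ (P h).card)
    (ha1 : 1 ≤ a ⟨0, ht⟩)
    (χ : Finset (Fin n) → Bool)
    (hdef : ∀ S : Finset (Fin n),
      χ S = true ↔ ∀ k : Fin t,
        (∑ h ∈ Finset.Iic k, a h) ≤ ∑ h ∈ Finset.Iic k, (S ∩ P h).card) :
    SimpleGame χ ∧ mu χ ≤ Real.sqrt n ∧ RoughlyWeighted χ (Real.sqrt n) := by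
  have hχ : HasShiftMinimalWinningVector P a χ := hdef
  have hn : 0 < n := Nat.lt_of_lt_of_le ha1 ((ha _).trans (card_finset_fin_le _))
  have hRW : RoughlyWeighted χ √n :=
    hχ.roughlyWeighted_sqrt (fun h h' => hPdisj h h') (fun k => Nat.zero_le k) ha1 hn
  exact ⟨hχ.simpleGame ha ha1,
    mu_le_of_roughlyWeighted (Real.one_le_sqrt.2 (by exact_mod_cast hn)) hRW, hRW⟩

/-- the complete simple game with a unique shift-minimal winning
vector `a` on classes `N₁,…,N_t` is a simple game with critical threshold value at
most `√n`. -/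
theorem unique_shift_minimal_winning_vector_bound (n t : ℕ) (ht : 0 < t)
    (P : Fin t → Finset (Fin n))
    (hPne : ∀ h : Fin t, (P h).Nonempty)
    (hPdisj : ∀ h h' : Fin t, h ≠ h' → Disjoint (P h) (P h'))
    (hPcover : (Finset.univ : Finset (Fin n)) = Finset.univ.biUnion P)
    (a : Fin t → ℕ) (ha : ∀ h : Fin t, a h ≤ (P h).card)
    (ha1 : 1 ≤ a ⟨0, ht⟩)
    (χ : Finset (Fin n) → Bool)
    (hdef : ∀ S : Finset (Fin n),
      χ S = true ↔ ∀ k : Fin t,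
        (∑ h ∈ Finset.Iic k, a h) ≤ ∑ h ∈ Finset.Iic k, (S ∩ P h).card) :
    SimpleGame χ ∧ mu χ ≤ Real.sqrt n ∧ RoughlyWeighted χ (Real.sqrt n) :=
  unique_shift_minimal_winning_vector_bound_general n t ht P hPdisj a ha ha1 χ hdef
end

section
/- There exist a constant C > 0 and a natural number n_0 such that for every n ≥ n_0 and every complete simple game χ on n voters, μ(χ) ≤ C · n · log(log n) / log n; that is, the critical threshold value of complete simple games on n voters is in O(n · log log n / log n). -/
open Finset

/-- Isbell's desirability relation: `i ⊒ j` iff replacing `j` by `i` in any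
coalition containing `j` but not `i` preserves winning. -/
def Desirable {n : ℕ} (χ : Finset (Fin n) → Bool) (i j : Fin n) : Prop :=
  ∀ S : Finset (Fin n), j ∈ S → i ∉ S →
    χ S = true → χ (insert i (S.erase j)) = true

/-- A complete simple game: a simple game whose desirability relation is total. -/
def CompleteSimpleGame {n : ℕ} (χ : Finset (Fin n) → Bool) : Prop :=
  SimpleGame χ ∧ ∀ i j : Fin n, Desirable χ i j ∨ Desirable χ j i


/-!
Desirability is a total preorder, so the voters can be relabelled so that a smaller index means
a more desirable voter. A coalition then stays winning when it is replaced by one of the same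
size whose extra members all precede its missing ones.

Fix `θ > 0` and let `t` be the first index from which no block of fewer than `θ` consecutive
voters wins. Give weight `1` to the voters before `t` and `1/θ` to the others. A winning
coalition either has a member before `t` or lies beyond `t`; in the latter case it can be
pushed onto the block starting at `t`, so it has at least `θ` members. A losing coalition has
fewer than `θ` members before `t` (its `p` members there precede the block of length `p` ending
at `t`, which therefore loses, while a block of fewer than `θ` voters starting at the same place
wins) and at most `n` after `t`. So `μ ≤ θ + n / θ`, which is `2 √n` for `θ = √n`, and
`2 √n = O(n log log n / log n)`.
-/

theorem Desirable.refl {n : ℕ} (χ : Finset (Fin n) → Bool) (i : Fin n) : Desirable χ i i :=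
  fun _ hi hi' => absurd hi hi'

theorem Desirable.trans {n : ℕ} {χ : Finset (Fin n) → Bool} {i j k : Fin n}
    (hij : Desirable χ i j) (hjk : Desirable χ j k) : Desirable χ i k := by
  intro S hkS hiS hS
  obtain rfl | hji := eq_or_ne j i
  · exact hjk S hkS hiS hS
  obtain rfl | hjk' := eq_or_ne j k
  · exact hij S hkS hiS hS
  by_cases hjS : j ∈ S
  · -- swap `j` for `i`, then `k` for `j`
    have h := hjk _ (by simp [hkS, hjk'.symm]) (by simp [hji]) (hij S hjS hiS hS)
    convert h using 2
    ext x
    simp only [mem_insert, mem_erase]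
    grind
  · -- swap `k` for `j`, then `j` for `i`
    have h := hij _ (mem_insert_self _ _) (by simp [hji.symm, hiS]) (hjk S hkS hjS hS)
    convert h using 2
    ext x
    simp only [mem_insert, mem_erase]
    grind

noncomputable def desirabilityRank {n : ℕ} (χ : Finset (Fin n) → Bool) (i : Fin n) : ℕ :=
  {k | Desirable χ k i}.ncard

theorem desirable_of_desirabilityRank_le {n : ℕ} {χ : Finset (Fin n) → Bool}
    (htot : ∀ i j : Fin n, Desirable χ i j ∨ Desirable χ j i) {i j : Fin n}
    (h : desirabilityRank χ i ≤ desirabilityRank χ j) : Desirable χ i j := by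
  by_contra hij
  have hji := (htot i j).resolve_left hij
  have hssub : {k | Desirable χ k j} ⊂ {k | Desirable χ k i} :=
    Set.ssubset_iff_of_subset (fun k hk => Desirable.trans hk hji) |>.2
      ⟨i, Desirable.refl χ i, hij⟩
  exact (Set.ncard_lt_ncard hssub).not_ge h

theorem exists_perm_desirable_of_le {n : ℕ} {χ : Finset (Fin n) → Bool}
    (htot : ∀ i j : Fin n, Desirable χ i j ∨ Desirable χ j i) :
    ∃ σ : Equiv.Perm (Fin n), ∀ s t, s ≤ t → Desirable χ (σ s) (σ t) :=
  ⟨Tuple.sort (desirabilityRank χ), fun _ _ h =>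
    desirable_of_desirabilityRank_le htot (Tuple.monotone_sort (desirabilityRank χ) h)⟩

section Relabel

variable {m n : ℕ} {χ : Finset (Fin n) → Bool} (e : Fin m ≃ Fin n)

theorem RoughlyWeighted.of_map {α : ℝ}
    (h : RoughlyWeighted (fun S => χ (S.map e.toEmbedding)) α) : RoughlyWeighted χ α := by
  obtain ⟨w, hwin, hlose⟩ := h
  refine ⟨fun i => w (e.symm i), fun S hS => ?_, fun S hS => ?_⟩
  · simpa [sum_map, map_map, hS] using hwin (S.map e.symm.toEmbedding)
  · simpa [sum_map, map_map, hS] using hlose (S.map e.symm.toEmbedding)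

theorem Desirable.of_map {i j : Fin m} (h : Desirable χ (e i) (e j)) :
    Desirable (fun S => χ (S.map e.toEmbedding)) i j := by
  classical
  intro S hj hi hS
  simpa [map_insert, map_erase] using h _ (by simpa using hj) (by simpa using hi) hS

end Relabel

def block (n i s : ℕ) : Finset (Fin n) := {x | i ≤ (x : ℕ) ∧ (x : ℕ) < i + s}

@[simp]
theorem mem_block {n i s : ℕ} {x : Fin n} : x ∈ block n i s ↔ i ≤ (x : ℕ) ∧ (x : ℕ) < i + s := by
  simp [block]

theorem card_block {n i s : ℕ} (h : i + s ≤ n) : #(block n i s) = s := by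
  rw [← card_map Fin.valEmbedding, show (block n i s).map Fin.valEmbedding = Ico i (i + s) by
    ext m
    simp only [mem_map, mem_block, Fin.valEmbedding_apply, mem_Ico]
    exact ⟨fun ⟨x, hx, hxm⟩ => hxm ▸ hx, fun hm => ⟨⟨m, by omega⟩, hm, rfl⟩⟩]
  simp

theorem block_mono {n i s s' : ℕ} (h : s ≤ s') : block n i s ⊆ block n i s' :=
  fun x hx => by simp only [mem_block] at hx ⊢; omega

theorem block_zero (n i : ℕ) : block n i 0 = ∅ :=
  eq_empty_of_forall_notMem fun x hx => by simp only [mem_block] at hx; omega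

theorem block_self (n s : ℕ) : block n n s = ∅ :=
  eq_empty_of_forall_notMem fun x hx => by simp only [mem_block] at hx; omega

theorem card_le_of_forall_val_mem_Ico {n a b : ℕ} {S : Finset (Fin n)}
    (h : ∀ x ∈ S, (x : ℕ) ∈ Ico a b) : #S ≤ b - a :=
  (card_le_card_of_injOn _ h Fin.val_injective.injOn).trans (Nat.card_Ico a b).le

section Sorted

variable {n : ℕ} {χ : Finset (Fin n) → Bool}

theorem win_of_exchange (hχ : ∀ i j : Fin n, i ≤ j → Desirable χ i j) {A B : Finset (Fin n)}
    (hcard : #A = #B) (hAB : ∀ a ∈ A \ B, ∀ b ∈ B \ A, a ≤ b) (hB : χ B = true) :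
    χ A = true := by
  classical
  induction hk : #(B \ A) generalizing B with
  | zero =>
    rwa [← eq_of_subset_of_card_le (sdiff_eq_empty_iff_subset.1 (card_eq_zero.1 hk)) hcard.le]
  | succ k ih =>
    obtain ⟨b, hb⟩ := card_pos.1 (by omega : 0 < #(B \ A))
    obtain ⟨a, ha⟩ := card_pos.1 (by rw [card_sdiff_comm hcard]; omega : 0 < #(A \ B))
    rw [mem_sdiff] at ha hb
    have hB' : insert a (B.erase b) \ A = (B \ A).erase b := by
      rw [insert_sdiff_of_mem _ ha.1, erase_sdiff_comm]
    have hA' : A \ insert a (B.erase b) ⊆ A \ B := fun x hx => by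
      simp only [mem_sdiff, mem_insert, mem_erase, not_or, not_and_or, not_not] at hx ⊢
      exact ⟨hx.1, fun hxB => hx.2.2.elim (fun hxb => hb.2 (hxb ▸ hx.1)) (absurd hxB)⟩
    refine ih (B := insert a (B.erase b)) ?_ ?_ (hχ a b ?_ B hb.1 ha.2 hB) ?_
    · rw [card_insert_of_notMem (by simp [ha.2]), card_erase_add_one hb.1, hcard]
    · rw [hB']
      exact fun x hx y hy => hAB x (hA' hx) y (mem_of_mem_erase hy)
    · exact hAB a (mem_sdiff.2 ha) b (mem_sdiff.2 hb)
    · rw [hB', card_erase_of_mem (mem_sdiff.2 hb), hk, Nat.add_sub_cancel]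

theorem exists_threshold_block (hempty : χ ∅ = false) (θ : ℝ) :
    ∃ t ≤ n, (∀ s : ℕ, (s : ℝ) < θ → χ (block n t s) = false) ∧
      ∀ i < t, ∃ s : ℕ, (s : ℝ) < θ ∧ χ (block n i s) = true := by
  classical
  have hex : ∃ t, ∀ s : ℕ, (s : ℝ) < θ → χ (block n t s) = false :=
    ⟨n, fun s _ => by rw [block_self, hempty]⟩
  refine ⟨Nat.find hex, Nat.find_min' hex fun s _ => by rw [block_self, hempty],
    Nat.find_spec hex, fun i hi => ?_⟩
  simpa using Nat.find_min hex hi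

variable (hχ : ∀ i j : Fin n, i ≤ j → Desirable χ i j)
include hχ

theorem win_block_of_win {i : ℕ} {S : Finset (Fin n)} (hS : ∀ x ∈ S, i ≤ (x : ℕ))
    (hwin : χ S = true) : χ (block n i #S) = true := by
  obtain rfl | ⟨y, hy⟩ := S.eq_empty_or_nonempty
  · rwa [card_empty, block_zero]
  have hcard : i + #S ≤ n := by
    have := card_le_of_forall_val_mem_Ico (a := i) (b := n) fun x hx =>
      mem_Ico.2 ⟨hS x hx, x.isLt⟩
    have := hS y hy
    omega
  refine win_of_exchange hχ (card_block hcard) (fun a ha b hb => ?_) hwin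
  simp only [mem_sdiff, mem_block] at ha hb
  have := hS b hb.1
  exact Fin.le_iff_val_le_val.2 (by omega)

theorem win_of_win_block {t : ℕ} (ht : t ≤ n) {P : Finset (Fin n)} (hP : ∀ x ∈ P, (x : ℕ) < t)
    (hwin : χ (block n (t - #P) #P) = true) : χ P = true := by
  have hcard : #P ≤ t := by
    simpa using card_le_of_forall_val_mem_Ico (a := 0) (b := t) fun x hx =>
      mem_Ico.2 ⟨x.val.zero_le, hP x hx⟩
  refine win_of_exchange hχ (card_block (by omega)).symm (fun a ha b hb => ?_) hwin
  simp only [mem_sdiff, mem_block] at ha hb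
  have := hP a ha.1
  exact Fin.le_iff_val_le_val.2 (by omega)

theorem card_lt_of_lose_below_threshold
    (hmono : ∀ S T : Finset (Fin n), S ⊆ T → χ S = true → χ T = true) {θ : ℝ} (hθ : 0 < θ)
    {t : ℕ} (htn : t ≤ n) (hwin_small : ∀ i < t, ∃ s : ℕ, (s : ℝ) < θ ∧ χ (block n i s) = true)
    {P : Finset (Fin n)} (hP : ∀ x ∈ P, (x : ℕ) < t) (hlose : χ P = false) : (#P : ℝ) < θ := by
  obtain hp | hp := Nat.eq_zero_or_pos #P
  · simpa [hp] using hθ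
  obtain ⟨x, hx⟩ := card_pos.1 hp
  obtain ⟨s, hsθ, hs⟩ := hwin_small (t - #P) (by have := hP x hx; omega)
  have hps : #P < s := by
    by_contra! h
    simp [win_of_win_block hχ htn hP (hmono _ _ (block_mono h) hs)] at hlose
  exact lt_trans (by exact_mod_cast hps) hsθ

theorem roughlyWeighted_of_sorted (hempty : χ ∅ = false)
    (hmono : ∀ S T : Finset (Fin n), S ⊆ T → χ S = true → χ T = true) {θ : ℝ} (hθ : 0 < θ) :
    RoughlyWeighted χ (θ + n / θ) := by
  classical
  obtain ⟨t, htn, hlose_small, hwin_small⟩ := exists_threshold_block hempty θ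
  have hsum : ∀ S : Finset (Fin n), ∑ x ∈ S, (if (x : ℕ) < t then 1 else θ⁻¹) =
      #{x ∈ S | x.val < t} + #{x ∈ S | ¬x.val < t} * θ⁻¹ := by
    intro S
    simp only [sum_ite, sum_const, nsmul_eq_mul, mul_one]
  refine ⟨fun x => if (x : ℕ) < t then 1 else θ⁻¹, fun S hS => ?_, fun L hL => ?_⟩
  · rw [hsum]
    obtain hp | hp := Nat.eq_zero_or_pos #{x ∈ S | x.val < t}
    · have htail : ∀ x ∈ S, t ≤ (x : ℕ) := by
        simpa [card_eq_zero, filter_eq_empty_iff] using hp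
      have hθS : θ ≤ #S := by
        by_contra! h
        have := win_block_of_win hχ htail hS
        simp [hlose_small _ h] at this
      rw [hp, filter_true_of_mem (by simpa using htail), Nat.cast_zero, zero_add,
        ← div_eq_mul_inv, one_le_div hθ]
      exact hθS
    · have : (1 : ℝ) ≤ #{x ∈ S | x.val < t} := by exact_mod_cast hp
      have : 0 ≤ (#{x ∈ S | ¬x.val < t} : ℝ) * θ⁻¹ := by positivity
      linarith
  · set P := {x ∈ L | x.val < t}
    have hP : ∀ x ∈ P, (x : ℕ) < t := fun x hx => (mem_filter.1 hx).2
    have hPlose : χ P = false := by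
      by_contra! h
      simp [hmono P L (filter_subset _ _) (by simpa using h)] at hL
    have hpθ := card_lt_of_lose_below_threshold hχ hmono hθ htn hwin_small hP hPlose
    have hq : (#{x ∈ L | ¬x.val < t} : ℝ) ≤ n := by
      exact_mod_cast (card_le_univ _).trans (Fintype.card_fin n).le
    rw [hsum, div_eq_mul_inv]
    gcongr

end Sorted

theorem mu_le_of_roughlyWeighted_s16 {n : ℕ} {f : Finset (Fin n) → Bool} {α : ℝ} (h1 : 1 ≤ α)
    (h : RoughlyWeighted f α) : mu f ≤ α :=
  csInf_le ⟨1, fun _ hβ => hβ.1⟩ ⟨h1, h⟩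

theorem CompleteSimpleGame.mu_le_two_sqrt {n : ℕ} {χ : Finset (Fin n) → Bool}
    (hχ : CompleteSimpleGame χ) (hn : 0 < n) : mu χ ≤ 2 * √n := by
  obtain ⟨⟨hempty, -, hmono⟩, htot⟩ := hχ
  obtain ⟨σ, hσ⟩ := exists_perm_desirable_of_le htot
  have hw : RoughlyWeighted χ (√n + n / √n) :=
    .of_map σ <| roughlyWeighted_of_sorted (fun s t hst => (hσ s t hst).of_map σ)
      (by simpa using hempty) (fun S T hST => hmono _ _ (map_subset_map.2 hST))
      (Real.sqrt_pos.2 (Nat.cast_pos.2 hn))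
  rw [Real.div_sqrt, ← two_mul] at hw
  exact mu_le_of_roughlyWeighted_s16 (by
    have : (1 : ℝ) ≤ √n := Real.one_le_sqrt.2 (by exact_mod_cast hn)
    linarith) hw

theorem two_sqrt_le_mul_log_log_div_log {x : ℝ} (hx : Real.exp (Real.exp 1) ≤ x) :
    2 * √x ≤ 4 * (x * Real.log (Real.log x) / Real.log x) := by
  have hx0 : 0 < x := (Real.exp_pos _).trans_le hx
  have hlog : Real.exp 1 ≤ Real.log x := (Real.le_log_iff_exp_le hx0).2 hx
  have hlog0 : 0 < Real.log x := (Real.exp_pos 1).trans_le hlog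
  have hloglog : 1 ≤ Real.log (Real.log x) := (Real.le_log_iff_exp_le hlog0).2 hlog
  -- `log x = 2 log √x ≤ 2 (√x - 1)`
  have hlog_le : Real.log x ≤ 2 * √x := by
    have := Real.log_le_sub_one_of_pos (Real.sqrt_pos.2 hx0)
    rw [Real.log_sqrt hx0.le] at this
    linarith
  have hsq : √x * √x = x := Real.mul_self_sqrt hx0.le
  rw [mul_div_assoc', le_div_iff₀ hlog0]
  nlinarith [Real.sqrt_nonneg x]

/-- the critical threshold value of complete simple games on `n`
voters is in `O(n · log log n / log n)`. -/
theorem complete_simple_game_critical_threshold_bigO :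
    ∃ C : ℝ, 0 < C ∧ ∃ n₀ : ℕ, ∀ n : ℕ, n₀ ≤ n →
      ∀ χ : Finset (Fin n) → Bool, CompleteSimpleGame χ →
        mu χ ≤ C * ((n : ℝ) * Real.log (Real.log n) / Real.log n) := by
  refine ⟨4, by norm_num, ⌈Real.exp (Real.exp 1)⌉₊, fun n hn χ hχ => ?_⟩
  have hn' : Real.exp (Real.exp 1) ≤ n := Nat.ceil_le.1 hn
  have hn0 : 0 < n := by exact_mod_cast (Real.exp_pos _).trans_le hn'
  exact (hχ.mu_le_two_sqrt hn0).trans (two_sqrt_le_mul_log_log_div_log hn')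
end
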